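/- arXiv:2103.04072 — 5 statements merged into one kernel-verified Lean document; each statement's English description precedes it below -/
import Mathlib

section
/- The function f₁(r) = (r - (1-r²)·artanh(r))/r³ is strictly increasing and convex on (0,1), with limits 2/3 as r→0⁺ and 1 as r→1⁻. -/
open Real Set Filter Topology

noncomputable def artanh (r : ℝ) : ℝ := (1/2) * Real.log ((1+r)/(1-r))

noncomputable def ellipticK (r : ℝ) : ℝ :=
  ∫ t in (0:ℝ)..(π/2), (1 - r^2 * Real.sin t ^ 2) ^ (-(1/2) : ℝ)

noncomputable def ellipticE (r : ℝ) : ℝ :=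
  ∫ t in (0:ℝ)..(π/2), (1 - r^2 * Real.sin t ^ 2) ^ ((1/2) : ℝ)

/-!
With `N₁ r = r - (1 - r²) artanh r` we have `f₁ = N₁ / r³` and `N₁' r = 2 r artanh r`. The signs
of `f₁'` and `f₁''`, and the bounds `2/3 r³ < N₁ r ≤ 2/3 r³ + 8/15 r⁵` near `0`, all say that
some `v` with `v 0 = 0` is positive (or nonnegative) to the right of `0`; differentiating `v`
once leads either to an expression of evident sign or to an earlier inequality of this kind.
Near `1`, writing `(1 - r²) log (1 - r) = (1 + r) · ((1 - r) log (1 - r))` shows that `N₁`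
extends continuously to `1` with value `1`.
-/

theorem pos_of_hasDerivAt_pos {a b : ℝ} {v v' : ℝ → ℝ}
    (hv : ∀ x ∈ Ico a b, HasDerivAt v (v' x) x) (ha : v a = 0)
    (hv' : ∀ x ∈ Ioo a b, 0 < v' x) {x : ℝ} (hx : x ∈ Ioo a b) : 0 < v x := by
  have hmono : StrictMonoOn v (Ico a b) := by
    refine strictMonoOn_of_hasDerivWithinAt_pos (f' := v') (convex_Ico a b)
      (fun y hy => (hv y hy).continuousAt.continuousWithinAt) (fun y hy => ?_) ?_
    · rw [interior_Ico] at hy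
      exact (hv y (Ioo_subset_Ico_self hy)).hasDerivWithinAt
    · simpa only [interior_Ico] using hv'
  simpa [ha] using hmono (left_mem_Ico.2 (hx.1.trans hx.2)) (Ioo_subset_Ico_self hx) hx.1

theorem nonneg_of_hasDerivAt_nonneg {a b : ℝ} {v v' : ℝ → ℝ}
    (hv : ∀ x ∈ Ico a b, HasDerivAt v (v' x) x) (ha : v a = 0)
    (hv' : ∀ x ∈ Ioo a b, 0 ≤ v' x) {x : ℝ} (hx : x ∈ Ioo a b) : 0 ≤ v x := by
  have hmono : MonotoneOn v (Ico a b) := by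
    refine monotoneOn_of_hasDerivWithinAt_nonneg (f' := v') (convex_Ico a b)
      (fun y hy => (hv y hy).continuousAt.continuousWithinAt) (fun y hy => ?_) ?_
    · rw [interior_Ico] at hy
      exact (hv y (Ioo_subset_Ico_self hy)).hasDerivWithinAt
    · simpa only [interior_Ico] using hv'
  simpa [ha] using
    hmono (left_mem_Ico.2 (hx.1.trans hx.2)) (Ioo_subset_Ico_self hx) hx.1.le

theorem hasDerivAt_artanh {r : ℝ} (h₁ : -1 < r) (h₂ : r < 1) :
    HasDerivAt _root_.artanh (1 / (1 - r^2)) r := by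
  have hp : 1 + r ≠ 0 := by linarith
  have hm : 1 - r ≠ 0 := by linarith
  have hquot := ((hasDerivAt_id' r).const_add 1).div ((hasDerivAt_id' r).const_sub 1) hm
  refine ((hquot.log (div_ne_zero hp hm)).const_mul (1/2)).congr_deriv ?_
  rw [Pi.div_apply, show 1 - r^2 = (1 + r) * (1 - r) by ring]
  field_simp
  ring

theorem one_sub_sq_pos {r : ℝ} (h₁ : -1 < r) (h₂ : r < 1) : 0 < 1 - r^2 := by
  nlinarith

theorem self_lt_artanh {r : ℝ} (hr : r ∈ Ioo (0:ℝ) 1) : r < _root_.artanh r := by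
  refine sub_pos.1 <| pos_of_hasDerivAt_pos (v := fun x => _root_.artanh x - x)
    (v' := fun x => x^2 / (1 - x^2)) (fun x hx => ?_) (by simp [_root_.artanh])
    (fun x hx => ?_) hr
  · have := one_sub_sq_pos (by linarith [hx.1]) hx.2
    refine ((hasDerivAt_artanh (by linarith [hx.1]) hx.2).sub (hasDerivAt_id' x)).congr_deriv ?_
    field_simp
    ring
  · have := one_sub_sq_pos (by linarith [hx.1]) hx.2
    have := hx.1
    positivity

theorem artanh_lt_div_one_sub_sq {r : ℝ} (hr : r ∈ Ioo (0:ℝ) 1) :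
    _root_.artanh r < r / (1 - r^2) := by
  refine sub_pos.1 <| pos_of_hasDerivAt_pos (v := fun x => x / (1 - x^2) - _root_.artanh x)
    (v' := fun x => 2 * x^2 / (1 - x^2)^2) (fun x hx => ?_) (by simp [_root_.artanh])
    (fun x hx => ?_) hr
  · have := one_sub_sq_pos (by linarith [hx.1]) hx.2
    refine (((hasDerivAt_id' x).div ((hasDerivAt_pow 2 x).const_sub 1) this.ne').sub
      (hasDerivAt_artanh (by linarith [hx.1]) hx.2)).congr_deriv ?_
    field_simp
    ring
  · have := one_sub_sq_pos (by linarith [hx.1]) hx.2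
    have := hx.1
    positivity

theorem sub_two_mul_cube_div_lt_artanh {r : ℝ} (hr : r ∈ Ioo (0:ℝ) 1) :
    (r - 2 * r^3) / (1 - r^2)^2 < _root_.artanh r := by
  refine sub_pos.1 <| pos_of_hasDerivAt_pos
    (v := fun x => _root_.artanh x - (x - 2 * x^3) / (1 - x^2)^2)
    (v' := fun x => (x^2 + 3 * x^4) / (1 - x^2)^3) (fun x hx => ?_) (by simp [_root_.artanh])
    (fun x hx => ?_) hr
  · have := one_sub_sq_pos (by linarith [hx.1]) hx.2
    have hnum : HasDerivAt (fun x => x - 2 * x^3) (1 - 6 * x^2) x :=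
      ((hasDerivAt_id' x).sub ((hasDerivAt_pow 3 x).const_mul 2)).congr_deriv
        (by push_cast; ring)
    have hden : HasDerivAt (fun x => (1 - x^2)^2) (-4 * x * (1 - x^2)) x :=
      (((hasDerivAt_pow 2 x).const_sub 1).pow 2).congr_deriv (by push_cast; ring)
    refine ((hasDerivAt_artanh (by linarith [hx.1]) hx.2).sub
      (hnum.div hden (by positivity))).congr_deriv ?_
    field_simp
    ring
  · have := one_sub_sq_pos (by linarith [hx.1]) hx.2
    have := hx.1
    positivity

theorem artanh_sub_self_le {r : ℝ} (hr : r ∈ Ioo (0:ℝ) (1/2)) :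
    _root_.artanh r - r ≤ 4/3 * r^3 := by
  refine sub_nonneg.1 <| nonneg_of_hasDerivAt_nonneg
    (v := fun x => 4/3 * x^3 - (_root_.artanh x - x))
    (v' := fun x => 4 * x^2 - x^2 / (1 - x^2)) (fun x hx => ?_) (by simp [_root_.artanh])
    (fun x hx => ?_) hr
  · have := one_sub_sq_pos (by linarith [hx.1]) (by linarith [hx.2])
    refine (((hasDerivAt_pow 3 x).const_mul (4/3)).sub
      ((hasDerivAt_artanh (by linarith [hx.1]) (by linarith [hx.2])).sub
        (hasDerivAt_id' x))).congr_deriv ?_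
    field_simp
    ring
  · have := one_sub_sq_pos (by linarith [hx.1]) (by linarith [hx.2])
    have : x^2 / (1 - x^2) ≤ 4 * x^2 := by
      rw [div_le_iff₀ this]
      nlinarith [mul_nonneg (sq_nonneg x) (show 0 ≤ 3 - 4 * x^2 by nlinarith [hx.1, hx.2])]
    linarith

noncomputable def N₁ (r : ℝ) : ℝ := r - (1 - r^2) * _root_.artanh r

noncomputable def f₁ (r : ℝ) : ℝ := N₁ r / r^3

theorem hasDerivAt_N₁ {r : ℝ} (h₁ : -1 < r) (h₂ : r < 1) :
    HasDerivAt N₁ (2 * r * _root_.artanh r) r := by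
  refine ((hasDerivAt_id' r).sub (((hasDerivAt_pow 2 r).const_sub 1).mul
    (hasDerivAt_artanh h₁ h₂))).congr_deriv ?_
  have := one_sub_sq_pos h₁ h₂
  field_simp
  ring

theorem hasDerivAt_three_sub_sq_mul_artanh_sub {r : ℝ} (h₁ : -1 < r) (h₂ : r < 1) :
    HasDerivAt (fun x => (3 - x^2) * _root_.artanh x - 3 * x)
      (2 * r * (r / (1 - r^2) - _root_.artanh r)) r := by
  have := one_sub_sq_pos h₁ h₂
  refine ((((hasDerivAt_pow 2 r).const_sub 3).mul (hasDerivAt_artanh h₁ h₂)).sub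
    ((hasDerivAt_id' r).const_mul 3)).congr_deriv ?_
  field_simp
  ring

theorem three_mul_lt_three_sub_sq_mul_artanh {r : ℝ} (hr : r ∈ Ioo (0:ℝ) 1) :
    3 * r < (3 - r^2) * _root_.artanh r := by
  refine sub_pos.1 <| pos_of_hasDerivAt_pos
    (fun x hx => hasDerivAt_three_sub_sq_mul_artanh_sub (by linarith [hx.1]) hx.2)
    (by simp [_root_.artanh]) (fun x hx => ?_) hr
  have := sub_pos.2 (artanh_lt_div_one_sub_sq hx)
  have := hx.1
  positivity

theorem twelve_sub_mul_artanh_lt {r : ℝ} (hr : r ∈ Ioo (0:ℝ) 1) :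
    (12 - 2 * r^2) * _root_.artanh r < 2 * r^3 / (1 - r^2) + 12 * r := by
  refine sub_pos.1 <| pos_of_hasDerivAt_pos
    (v := fun x => 2 * x^3 / (1 - x^2) + 12 * x - (12 - 2 * x^2) * _root_.artanh x)
    (v' := fun x => 4 * x * (_root_.artanh x - (x - 2 * x^3) / (1 - x^2)^2)) (fun x hx => ?_)
    (by simp [_root_.artanh]) (fun x hx => ?_) hr
  · have := one_sub_sq_pos (by linarith [hx.1]) hx.2
    refine (((((hasDerivAt_pow 3 x).const_mul 2).div ((hasDerivAt_pow 2 x).const_sub 1)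
      this.ne').add ((hasDerivAt_id' x).const_mul 12)).sub
        ((((hasDerivAt_pow 2 x).const_mul 2).const_sub 12).mul
          (hasDerivAt_artanh (by linarith [hx.1]) hx.2))).congr_deriv ?_
    field_simp
    ring
  · have := sub_pos.2 (sub_two_mul_cube_div_lt_artanh hx)
    have := hx.1
    positivity

theorem two_thirds_mul_cube_lt_N₁ {r : ℝ} (hr : r ∈ Ioo (0:ℝ) 1) : 2/3 * r^3 < N₁ r := by
  refine sub_pos.1 <| pos_of_hasDerivAt_pos (v := fun x => N₁ x - 2/3 * x^3)
    (v' := fun x => 2 * x * (_root_.artanh x - x)) (fun x hx => ?_)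
    (by simp [N₁, _root_.artanh]) (fun x hx => ?_) hr
  · refine ((hasDerivAt_N₁ (by linarith [hx.1]) hx.2).sub
      ((hasDerivAt_pow 3 x).const_mul (2/3))).congr_deriv ?_
    push_cast
    ring
  · have := sub_pos.2 (self_lt_artanh hx)
    have := hx.1
    positivity

theorem N₁_le {r : ℝ} (hr : r ∈ Ioo (0:ℝ) (1/2)) : N₁ r ≤ 2/3 * r^3 + 8/15 * r^5 := by
  refine sub_nonneg.1 <| nonneg_of_hasDerivAt_nonneg
    (v := fun x => 2/3 * x^3 + 8/15 * x^5 - N₁ x)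
    (v' := fun x => 2 * x * (4/3 * x^3 - (_root_.artanh x - x))) (fun x hx => ?_)
    (by simp [N₁, _root_.artanh]) (fun x hx => ?_) hr
  · refine ((((hasDerivAt_pow 3 x).const_mul (2/3)).add ((hasDerivAt_pow 5 x).const_mul (8/15))).sub
      (hasDerivAt_N₁ (by linarith [hx.1]) (by linarith [hx.2]))).congr_deriv ?_
    push_cast
    ring
  · have := sub_nonneg.2 (artanh_sub_self_le hx)
    have := hx.1
    positivity

noncomputable def f₁' (r : ℝ) : ℝ := ((3 - r^2) * _root_.artanh r - 3 * r) / r^4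

noncomputable def f₁'' (r : ℝ) : ℝ :=
  (2 * r^3 / (1 - r^2) + 12 * r - (12 - 2 * r^2) * _root_.artanh r) / r^5

theorem hasDerivAt_f₁ {r : ℝ} (h₀ : r ≠ 0) (h₁ : -1 < r) (h₂ : r < 1) :
    HasDerivAt f₁ (f₁' r) r := by
  refine ((hasDerivAt_N₁ h₁ h₂).div (hasDerivAt_pow 3 r) (by positivity)).congr_deriv ?_
  simp only [N₁, f₁']
  field_simp
  ring

theorem hasDerivAt_f₁' {r : ℝ} (h₀ : r ≠ 0) (h₁ : -1 < r) (h₂ : r < 1) :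
    HasDerivAt f₁' (f₁'' r) r := by
  have := one_sub_sq_pos h₁ h₂
  refine ((hasDerivAt_three_sub_sq_mul_artanh_sub h₁ h₂).div (hasDerivAt_pow 4 r)
    (by positivity)).congr_deriv ?_
  rw [f₁'']
  field_simp
  ring

theorem f₁_strictMonoOn : StrictMonoOn f₁ (Ioo 0 1) := by
  refine strictMonoOn_of_hasDerivWithinAt_pos (f' := f₁') (convex_Ioo 0 1)
    (fun x hx => (hasDerivAt_f₁ hx.1.ne' (by linarith [hx.1]) hx.2).continuousAt.continuousWithinAt)
    (fun x hx => ?_) (fun x hx => ?_) <;> rw [interior_Ioo] at hx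
  · exact (hasDerivAt_f₁ hx.1.ne' (by linarith [hx.1]) hx.2).hasDerivWithinAt
  · have := sub_pos.2 (three_mul_lt_three_sub_sq_mul_artanh hx)
    have := hx.1
    unfold f₁'
    positivity

theorem f₁_convexOn : ConvexOn ℝ (Ioo 0 1) f₁ := by
  refine convexOn_of_hasDerivWithinAt2_nonneg (f' := f₁') (f'' := f₁'') (convex_Ioo 0 1)
    (fun x hx => (hasDerivAt_f₁ hx.1.ne' (by linarith [hx.1]) hx.2).continuousAt.continuousWithinAt)
    (fun x hx => ?_) (fun x hx => ?_) (fun x hx => ?_) <;> rw [interior_Ioo] at hx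
  · exact (hasDerivAt_f₁ hx.1.ne' (by linarith [hx.1]) hx.2).hasDerivWithinAt
  · exact (hasDerivAt_f₁' hx.1.ne' (by linarith [hx.1]) hx.2).hasDerivWithinAt
  · have := sub_pos.2 (twelve_sub_mul_artanh_lt hx)
    have := hx.1
    unfold f₁''
    positivity

theorem tendsto_f₁_nhdsGT_zero : Tendsto f₁ (𝓝[>] 0) (𝓝 (2/3)) := by
  have hbound : ∀ᶠ r in 𝓝[>] (0:ℝ), 2/3 ≤ f₁ r ∧ f₁ r ≤ 2/3 + 8/15 * r^2 := by
    filter_upwards [Ioo_mem_nhdsGT (by norm_num : (0:ℝ) < 1/2)] with r hr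
    have hr3 : 0 < r^3 := pow_pos hr.1 3
    have hlow := two_thirds_mul_cube_lt_N₁ ⟨hr.1, by linarith [hr.2]⟩
    have hupp := N₁_le hr
    unfold f₁
    constructor
    · rw [le_div_iff₀ hr3]; linarith
    · rw [div_le_iff₀ hr3]; linarith
  have hupper : Tendsto (fun r : ℝ => 2/3 + 8/15 * r^2) (𝓝[>] 0) (𝓝 (2/3)) := by
    have : Continuous (fun r : ℝ => 2/3 + 8/15 * r^2) := by fun_prop
    simpa using (this.tendsto 0).mono_left nhdsWithin_le_nhds
  exact tendsto_of_tendsto_of_tendsto_of_le_of_le' tendsto_const_nhds hupper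
    (hbound.mono fun _ h => h.1) (hbound.mono fun _ h => h.2)

theorem N₁_eq_of_mem_Ioo {r : ℝ} (hr : r ∈ Ioo (-1:ℝ) 1) :
    N₁ r = r - 1/2 * ((1 - r^2) * log (1 + r) - (1 + r) * ((1 - r) * log (1 - r))) := by
  rw [N₁, _root_.artanh, log_div (by linarith [hr.1]) (by linarith [hr.2])]
  ring

theorem tendsto_f₁_nhdsLT_one : Tendsto f₁ (𝓝[<] 1) (𝓝 1) := by
  let g : ℝ → ℝ := fun r => (r - 1/2 * ((1 - r^2) * log (1 + r) -
    (1 + r) * ((1 - r) * log (1 - r)))) / r^3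
  have hg : ContinuousAt g 1 := by
    have hlog : ContinuousAt (fun r : ℝ => log (1 + r)) 1 :=
      (continuousAt_log (by norm_num)).comp (by fun_prop)
    have hmul_log : Continuous (fun r : ℝ => (1 - r) * log (1 - r)) :=
      continuous_mul_log.comp (by fun_prop)
    exact ContinuousAt.div (by fun_prop) (by fun_prop) (by norm_num)
  have hlim : Tendsto g (𝓝[<] 1) (𝓝 1) := by
    simpa [g] using hg.tendsto.mono_left nhdsWithin_le_nhds
  refine hlim.congr' ?_
  filter_upwards [Ioo_mem_nhdsLT (by norm_num : (-1:ℝ) < 1)] with r hr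
  rw [f₁, N₁_eq_of_mem_Ioo hr]

theorem stmt0 :
    StrictMonoOn (fun r : ℝ => (r - (1 - r^2) * _root_.artanh r) / r^3) (Ioo 0 1) ∧
    ConvexOn ℝ (Ioo 0 1) (fun r : ℝ => (r - (1 - r^2) * _root_.artanh r) / r^3) ∧
    Tendsto (fun r : ℝ => (r - (1 - r^2) * _root_.artanh r) / r^3) (𝓝[>] 0) (𝓝 (2/3)) ∧
    Tendsto (fun r : ℝ => (r - (1 - r^2) * _root_.artanh r) / r^3) (𝓝[<] 1) (𝓝 1) :=
  ⟨f₁_strictMonoOn, f₁_convexOn, tendsto_f₁_nhdsGT_zero, tendsto_f₁_nhdsLT_one⟩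
end

section
/- The function f₈(r) = [(1-r²)·artanh(r)/(r - (1-r²)·artanh(r))] · log(artanh(r)/r) is strictly decreasing on (0,1), with limit 1/2 as r→0⁺ and 0 as r→1⁻. -/
/-!
Put `s = 2 artanh r`, so that `s` runs over `(0, ∞)` as `r` runs over `(0, 1)`. Since
`sinh s = 2r / (1 - r²)` and `cosh s = (1 + r²) / (1 - r²)`, the function becomes
`num₀ s / den₀ s` with `num₀ s = log (s (cosh s + 1) / (2 sinh s))` and `den₀ s = sinh s / s - 1`,
both vanishing at `0⁺`. Three applications of the monotone form of l'Hôpital's rule reduce both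
the monotonicity and the limit `1/2` at `0⁺` to the quotient
`(2 cosh s + s sinh s - 2) / (4 s sinh s cosh s) = (1 + tanh (s/2) / (s/2)) / (4 cosh s)`,
which is decreasing with limit `1/2`. As `s → ∞`, `0 ≤ num₀ s ≤ s` while `den₀ s` grows
exponentially, so the quotient tends to `0`.
-/

open Real Set Filter Topology

theorem StrictMonoOn.pos_of_tendsto_nhdsGT {a : ℝ} {g : ℝ → ℝ} (hg : StrictMonoOn g (Ioi a))
    (hga : Tendsto g (𝓝[>] a) (𝓝 0)) {x : ℝ} (hx : a < x) : 0 < g x := by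
  have hmid : a < (a + x) / 2 := by linarith
  have hle : 0 ≤ g ((a + x) / 2) := by
    refine le_of_tendsto hga ?_
    filter_upwards [Ioo_mem_nhdsGT hmid] with y hy
    exact (hg hy.1 hmid hy.2).le
  exact hle.trans_lt (hg hmid hx (by linarith))

theorem strictMonoOn_of_hasDerivAt_pos {a : ℝ} {g g' : ℝ → ℝ}
    (hg : ∀ x ∈ Ioi a, HasDerivAt g (g' x) x) (hg' : ∀ x ∈ Ioi a, 0 < g' x) :
    StrictMonoOn g (Ioi a) := by
  refine strictMonoOn_of_hasDerivWithinAt_pos (f' := g') (convex_Ioi a)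
    (fun x hx => (hg x hx).continuousAt.continuousWithinAt) ?_ ?_ <;> rw [interior_Ioi]
  exacts [fun x hx => (hg x hx).hasDerivWithinAt, hg']

theorem tendsto_nhdsGT_zero_of_continuous {f : ℝ → ℝ} (hf : Continuous f) (h0 : f 0 = 0) :
    Tendsto f (𝓝[>] 0) (𝓝 0) :=
  (hf.tendsto' 0 0 h0).mono_left nhdsWithin_le_nhds

/-- The monotone form of l'Hôpital's rule. -/
theorem strictAntiOn_div_of_strictAntiOn_deriv_div {a : ℝ} {f g f' g' : ℝ → ℝ}
    (hf : ∀ x ∈ Ioi a, HasDerivAt f (f' x) x) (hg : ∀ x ∈ Ioi a, HasDerivAt g (g' x) x)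
    (hfa : Tendsto f (𝓝[>] a) (𝓝 0)) (hga : Tendsto g (𝓝[>] a) (𝓝 0))
    (hg' : ∀ x ∈ Ioi a, 0 < g' x) (hanti : StrictAntiOn (fun x => f' x / g' x) (Ioi a)) :
    StrictAntiOn (fun x => f x / g x) (Ioi a) := by
  -- By Cauchy's mean value theorem `f x / g x` and `(f y - f x) / (g y - g x)` are values of
  -- `f' / g'` at points `c < d`, and `f y / g y` is a mediant of these two quotients.
  have hg_mono := strictMonoOn_of_hasDerivAt_pos hg hg'
  intro x hx y hy hxy
  have hax : a < x := hx
  obtain ⟨c, hc, hfgc⟩ := exists_ratio_hasDerivAt_eq_ratio_slope' f f' hax g g'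
    (fun t ht => hf t ht.1) (fun t ht => hg t ht.1) hfa hga
    ((hf x hx).continuousAt.tendsto.mono_left nhdsWithin_le_nhds)
    ((hg x hx).continuousAt.tendsto.mono_left nhdsWithin_le_nhds)
  have hIcc : Icc x y ⊆ Ioi a := fun t ht => hax.trans_le ht.1
  obtain ⟨d, hd, hfgd⟩ := exists_ratio_hasDerivAt_eq_ratio_slope f f' hxy
    (fun t ht => (hf t (hIcc ht)).continuousAt.continuousWithinAt)
    (fun t ht => hf t (hIcc (Ioo_subset_Icc_self ht)))
    g g' (fun t ht => (hg t (hIcc ht)).continuousAt.continuousWithinAt)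
    (fun t ht => hg t (hIcc (Ioo_subset_Icc_self ht)))
  have hgx : 0 < g x := hg_mono.pos_of_tendsto_nhdsGT hga hax
  have hgxy : 0 < g y - g x := sub_pos.2 (hg_mono hx hy hxy)
  have hc' : 0 < g' c := hg' c hc.1
  have hd' : 0 < g' d := hg' d (hIcc (Ioo_subset_Icc_self hd))
  have hfgx : f x / g x = f' c / g' c := by
    rw [div_eq_div_iff hgx.ne' hc'.ne']; linarith
  have hslope : (f y - f x) / (g y - g x) = f' d / g' d := by
    rw [div_eq_div_iff hgxy.ne' hd'.ne']; linarith
  have key : (f y - f x) / (g y - g x) < f x / g x := by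
    rw [hfgx, hslope]
    exact hanti hc.1 (hIcc (Ioo_subset_Icc_self hd)) (hc.2.trans hd.1)
  rw [div_lt_div_iff₀ hgxy hgx] at key
  show f y / g y < f x / g x
  rw [div_lt_div_iff₀ (hgx.trans (sub_pos.1 hgxy)) hgx]
  linarith

theorem strictAntiOn_div_and_tendsto_of_deriv_div {a L : ℝ} {f g f' g' : ℝ → ℝ}
    (hf : ∀ x ∈ Ioi a, HasDerivAt f (f' x) x) (hg : ∀ x ∈ Ioi a, HasDerivAt g (g' x) x)
    (hfa : Tendsto f (𝓝[>] a) (𝓝 0)) (hga : Tendsto g (𝓝[>] a) (𝓝 0))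
    (hg' : ∀ x ∈ Ioi a, 0 < g' x)
    (h : StrictAntiOn (fun x => f' x / g' x) (Ioi a) ∧
      Tendsto (fun x => f' x / g' x) (𝓝[>] a) (𝓝 L)) :
    StrictAntiOn (fun x => f x / g x) (Ioi a) ∧ Tendsto (fun x => f x / g x) (𝓝[>] a) (𝓝 L) :=
  ⟨strictAntiOn_div_of_strictAntiOn_deriv_div hf hg hfa hga hg' h.1,
    HasDerivAt.lhopital_zero_right_on_Ioo (lt_add_one a) (fun x hx => hf x hx.1)
      (fun x hx => hg x hx.1) (fun x hx => (hg' x hx.1).ne') hfa hga h.2⟩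

namespace Real

theorem sinh_lt_mul_cosh {s : ℝ} (hs : 0 < s) : sinh s < s * cosh s := by
  have hderiv : ∀ x ∈ Ioi (0 : ℝ), HasDerivAt (fun x => x * cosh x - sinh x) (x * sinh x) x :=
    fun x _ => (((hasDerivAt_id x).mul (hasDerivAt_cosh x)).sub (hasDerivAt_sinh x)).congr_deriv
      (by simp)
  have hmono := strictMonoOn_of_hasDerivAt_pos hderiv fun x hx => mul_pos hx (sinh_pos_iff.2 hx)
  have hlim : Tendsto (fun x => x * cosh x - sinh x) (𝓝[>] 0) (𝓝 0) :=
    ((by fun_prop : Continuous fun x => x * cosh x - sinh x).tendsto' 0 0 (by simp)).mono_left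
      nhdsWithin_le_nhds
  exact sub_pos.1 (hmono.pos_of_tendsto_nhdsGT hlim hs)

theorem tendsto_sinh_div_self : Tendsto (fun x => sinh x / x) (𝓝[≠] 0) (𝓝 1) := by
  have h := hasDerivAt_iff_tendsto_slope.1 (hasDerivAt_sinh 0)
  rw [cosh_zero] at h
  exact h.congr fun x => by simp [slope_def_field]

theorem antitoneOn_sinh_div_mul_cosh : AntitoneOn (fun x => sinh x / (x * cosh x)) (Ioi 0) := by
  have hderiv : ∀ x ∈ Ioi (0 : ℝ), HasDerivAt (fun x => sinh x / (x * cosh x))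
      ((x - sinh x * cosh x) / (x * cosh x) ^ 2) x := by
    intro x (hx : 0 < x)
    have hne : x * cosh x ≠ 0 := (mul_pos hx (cosh_pos x)).ne'
    refine ((hasDerivAt_sinh x).fun_div ((hasDerivAt_id' x).fun_mul (hasDerivAt_cosh x))
      hne).congr_deriv ?_
    linear_combination (x / (x * cosh x) ^ 2) * cosh_sq_sub_sinh_sq x
  refine antitoneOn_of_deriv_nonpos (convex_Ioi 0)
    (fun x hx => (hderiv x hx).continuousAt.continuousWithinAt) ?_ ?_ <;> rw [interior_Ioi]
  · exact fun x hx => (hderiv x hx).differentiableAt.differentiableWithinAt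
  · intro x (hx : 0 < x)
    rw [(hderiv x hx).deriv]
    have hx' : x < sinh x := self_lt_sinh_iff.2 hx
    have := mul_le_mul_of_nonneg_left (one_le_cosh x) (hx.trans hx').le
    exact div_nonpos_of_nonpos_of_nonneg (by linarith) (sq_nonneg _)

theorem tendsto_sinh_div_mul_cosh :
    Tendsto (fun x => sinh x / (x * cosh x)) (𝓝[≠] 0) (𝓝 1) := by
  have hcosh : Tendsto cosh (𝓝[≠] 0) (𝓝 1) := by
    simpa using continuous_cosh.continuousAt.tendsto.mono_left (nhdsWithin_le_nhds (a := (0:ℝ)))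
  simpa using (tendsto_sinh_div_self.div hcosh one_ne_zero).congr fun x => div_div _ _ _

theorem tendsto_sq_div_sinh_sub_self_atTop :
    Tendsto (fun s => s ^ 2 / (sinh s - s)) atTop (𝓝 0) := by
  have hden : Tendsto (fun s => (sinh s - s) * exp (-s)) atTop (𝓝 (1 / 2)) := by
    have hexp := tendsto_exp_neg_atTop_nhds_zero
    have hlin : Tendsto (fun s => s * exp (-s)) atTop (𝓝 0) := by
      simpa using tendsto_pow_mul_exp_neg_atTop_nhds_zero 1
    have h := (((hexp.pow 2).const_sub 1).div_const 2).sub hlin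
    norm_num at h
    refine h.congr fun s => ?_
    rw [sinh_eq, sub_mul, div_mul_eq_mul_div, sub_mul, ← exp_add]
    simp only [add_neg_cancel, exp_zero]
    ring
  have h := (tendsto_pow_mul_exp_neg_atTop_nhds_zero 2).div hden (by norm_num)
  rw [zero_div] at h
  exact h.congr fun s => mul_div_mul_right _ _ (exp_pos (-s)).ne'

end Real

namespace ArtanhRatio

/-! `num₁ / den₁ = num₀' / den₀'` on `(0, ∞)`, while `numₖ₊₁ = numₖ'` and `denₖ₊₁ = denₖ'` for
`k = 1, 2`. -/

noncomputable def num₀ (s : ℝ) : ℝ := log (s * (cosh s + 1) / (2 * sinh s))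
noncomputable def den₀ (s : ℝ) : ℝ := (sinh s - s) / s
noncomputable def num₁ (s : ℝ) : ℝ := s * sinh s - s ^ 2
noncomputable def den₁ (s : ℝ) : ℝ := sinh s * (s * cosh s - sinh s)
noncomputable def num₂ (s : ℝ) : ℝ := sinh s + s * cosh s - 2 * s
noncomputable def den₂ (s : ℝ) : ℝ := cosh s * (s * cosh s - sinh s) + s * sinh s ^ 2
noncomputable def num₃ (s : ℝ) : ℝ := 2 * cosh s + s * sinh s - 2
noncomputable def den₃ (s : ℝ) : ℝ := 4 * s * sinh s * cosh s

theorem hasDerivAt_num₀ {s : ℝ} (hs : 0 < s) : HasDerivAt num₀ (1 / s - 1 / sinh s) s := by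
  have hsinh : 0 < sinh s := sinh_pos_iff.2 hs
  have hnum := (hasDerivAt_id' s).fun_mul ((hasDerivAt_cosh s).add_const 1)
  have hden := (hasDerivAt_sinh s).const_mul 2
  have hq := hnum.fun_div hden (by positivity)
  refine (hq.log (by have := cosh_pos s; positivity)).congr_deriv ?_
  field_simp
  linear_combination -s * cosh_sq_sub_sinh_sq s

theorem hasDerivAt_den₀ {s : ℝ} (hs : s ≠ 0) :
    HasDerivAt den₀ ((s * cosh s - sinh s) / s ^ 2) s := by
  refine (((hasDerivAt_sinh s).fun_sub (hasDerivAt_id' s)).fun_div (hasDerivAt_id' s)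
    hs).congr_deriv ?_
  field_simp
  ring

theorem hasDerivAt_num₁ (s : ℝ) : HasDerivAt num₁ (num₂ s) s := by
  refine (((hasDerivAt_id' s).fun_mul (hasDerivAt_sinh s)).sub
    (hasDerivAt_pow 2 s)).congr_deriv ?_
  simp only [num₂]
  ring

theorem hasDerivAt_den₁ (s : ℝ) : HasDerivAt den₁ (den₂ s) s := by
  refine ((hasDerivAt_sinh s).fun_mul (((hasDerivAt_id' s).fun_mul (hasDerivAt_cosh s)).fun_sub
    (hasDerivAt_sinh s))).congr_deriv ?_
  simp only [den₂]
  ring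

theorem hasDerivAt_num₂ (s : ℝ) : HasDerivAt num₂ (num₃ s) s := by
  refine (((hasDerivAt_sinh s).add ((hasDerivAt_id' s).fun_mul (hasDerivAt_cosh s))).sub
    ((hasDerivAt_id' s).const_mul 2)).congr_deriv ?_
  simp only [num₃]
  ring

theorem hasDerivAt_den₂ (s : ℝ) : HasDerivAt den₂ (den₃ s) s := by
  refine (((hasDerivAt_cosh s).fun_mul (((hasDerivAt_id' s).fun_mul (hasDerivAt_cosh s)).fun_sub
    (hasDerivAt_sinh s))).add
      ((hasDerivAt_id' s).fun_mul ((hasDerivAt_sinh s).fun_pow 2))).congr_deriv ?_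
  simp only [den₃]
  ring

theorem den₂_pos {s : ℝ} (hs : 0 < s) : 0 < den₂ s := by
  have := sub_pos.2 (sinh_lt_mul_cosh hs)
  have := cosh_pos s
  have := sinh_pos_iff.2 hs
  unfold den₂; positivity

theorem den₃_pos {s : ℝ} (hs : 0 < s) : 0 < den₃ s := by
  have := cosh_pos s
  have := sinh_pos_iff.2 hs
  unfold den₃; positivity

theorem tendsto_num₀ : Tendsto num₀ (𝓝[>] 0) (𝓝 0) := by
  have hsinh := (tendsto_sinh_div_self.mono_left (nhdsGT_le_nhdsNE 0)).inv₀ one_ne_zero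
  have hcosh : Tendsto (fun s => (cosh s + 1) / 2) (𝓝[>] 0) (𝓝 1) := by
    simpa using ((by fun_prop : Continuous fun s => (cosh s + 1) / 2).tendsto 0).mono_left
      nhdsWithin_le_nhds
  have hinner : Tendsto (fun s => s * (cosh s + 1) / (2 * sinh s)) (𝓝[>] 0) (𝓝 1) := by
    have h := hsinh.mul hcosh
    rw [inv_one, one_mul] at h
    refine h.congr' ?_
    filter_upwards [self_mem_nhdsWithin] with s (hs : 0 < s)
    field_simp
  have h := (continuousAt_log one_ne_zero).tendsto.comp hinner
  rw [log_one] at h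
  exact h

theorem tendsto_den₀ : Tendsto den₀ (𝓝[>] 0) (𝓝 0) := by
  have h := (tendsto_sinh_div_self.mono_left (nhdsGT_le_nhdsNE 0)).sub_const 1
  rw [sub_self] at h
  refine h.congr' ?_
  filter_upwards [self_mem_nhdsWithin] with s (hs : 0 < s)
  simp only [den₀]
  field_simp

theorem tendsto_num₁ : Tendsto num₁ (𝓝[>] 0) (𝓝 0) :=
  tendsto_nhdsGT_zero_of_continuous (by unfold num₁; fun_prop) (by simp [num₁])

theorem tendsto_den₁ : Tendsto den₁ (𝓝[>] 0) (𝓝 0) :=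
  tendsto_nhdsGT_zero_of_continuous (by unfold den₁; fun_prop) (by simp [den₁])

theorem tendsto_num₂ : Tendsto num₂ (𝓝[>] 0) (𝓝 0) :=
  tendsto_nhdsGT_zero_of_continuous (by unfold num₂; fun_prop) (by simp [num₂])

theorem tendsto_den₂ : Tendsto den₂ (𝓝[>] 0) (𝓝 0) :=
  tendsto_nhdsGT_zero_of_continuous (by unfold den₂; fun_prop) (by simp [den₂])

theorem deriv_num₀_div_deriv_den₀ {s : ℝ} (hs : 0 < s) :
    (1 / s - 1 / sinh s) / ((s * cosh s - sinh s) / s ^ 2) = num₁ s / den₁ s := by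
  have hsinh : 0 < sinh s := sinh_pos_iff.2 hs
  have hsc : 0 < s * cosh s - sinh s := sub_pos.2 (sinh_lt_mul_cosh hs)
  simp only [num₁, den₁]
  field_simp

theorem num₃_div_den₃_eq {s : ℝ} (hs : 0 < s) :
    num₃ s / den₃ s = (1 + sinh (s / 2) / (s / 2 * cosh (s / 2))) / (4 * cosh s) := by
  obtain ⟨t, rfl⟩ : ∃ t, s = 2 * t := ⟨s / 2, by ring⟩
  have ht : 0 < t := by linarith
  have hsinh : 0 < sinh t := sinh_pos_iff.2 ht
  have hcosh : 0 < cosh t := cosh_pos t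
  rw [mul_div_cancel_left₀ t two_ne_zero]
  simp only [num₃, den₃, sinh_two_mul, cosh_two_mul]
  field_simp
  linear_combination cosh_sq t

theorem strictAntiOn_num₃_div_den₃ : StrictAntiOn (fun s => num₃ s / den₃ s) (Ioi 0) := by
  intro x (hx : 0 < x) y (hy : 0 < y) hxy
  simp only [num₃_div_den₃_eq hx, num₃_div_den₃_eq hy]
  have hT := antitoneOn_sinh_div_mul_cosh (half_pos hx) (half_pos hy) (by linarith)
  have hTx : 0 < sinh (x / 2) / (x / 2 * cosh (x / 2)) := by
    have := sinh_pos_iff.2 (half_pos hx); have := cosh_pos (x / 2); positivity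
  have hcosh : cosh x < cosh y := by rwa [cosh_lt_cosh, abs_of_pos hx, abs_of_pos hy]
  calc (1 + sinh (y / 2) / (y / 2 * cosh (y / 2))) / (4 * cosh y)
      ≤ (1 + sinh (x / 2) / (x / 2 * cosh (x / 2))) / (4 * cosh y) := by
        gcongr
    _ < (1 + sinh (x / 2) / (x / 2 * cosh (x / 2))) / (4 * cosh x) := by
        gcongr

theorem tendsto_num₃_div_den₃ : Tendsto (fun s => num₃ s / den₃ s) (𝓝[>] 0) (𝓝 (1 / 2)) := by
  have hhalf : Tendsto (fun s : ℝ => s / 2) (𝓝[>] 0) (𝓝[≠] 0) := by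
    refine tendsto_nhdsWithin_iff.2 ⟨?_, ?_⟩
    · simpa using ((continuous_id.div_const (2 : ℝ)).tendsto 0).mono_left nhdsWithin_le_nhds
    · filter_upwards [self_mem_nhdsWithin] with s (hs : 0 < s)
      exact (half_pos hs).ne'
  have hcosh : Tendsto (fun s => 4 * cosh s) (𝓝[>] 0) (𝓝 4) := by
    simpa using ((by fun_prop : Continuous fun s => 4 * cosh s).tendsto 0).mono_left
      nhdsWithin_le_nhds
  have h := ((tendsto_sinh_div_mul_cosh.comp hhalf).const_add 1).div hcosh (by norm_num)
  norm_num at h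
  refine h.congr' ?_
  filter_upwards [self_mem_nhdsWithin] with s (hs : 0 < s)
  exact (num₃_div_den₃_eq hs).symm

theorem strictAntiOn_num₂_div_den₂_and_tendsto :
    StrictAntiOn (fun s => num₂ s / den₂ s) (Ioi 0) ∧
      Tendsto (fun s => num₂ s / den₂ s) (𝓝[>] 0) (𝓝 (1 / 2)) :=
  strictAntiOn_div_and_tendsto_of_deriv_div (fun s _ => hasDerivAt_num₂ s)
    (fun s _ => hasDerivAt_den₂ s) tendsto_num₂ tendsto_den₂ (fun _ hs => den₃_pos hs)
    ⟨strictAntiOn_num₃_div_den₃, tendsto_num₃_div_den₃⟩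

theorem strictAntiOn_num₁_div_den₁_and_tendsto :
    StrictAntiOn (fun s => num₁ s / den₁ s) (Ioi 0) ∧
      Tendsto (fun s => num₁ s / den₁ s) (𝓝[>] 0) (𝓝 (1 / 2)) :=
  strictAntiOn_div_and_tendsto_of_deriv_div (fun s _ => hasDerivAt_num₁ s)
    (fun s _ => hasDerivAt_den₁ s) tendsto_num₁ tendsto_den₁ (fun _ hs => den₂_pos hs)
    strictAntiOn_num₂_div_den₂_and_tendsto

theorem strictAntiOn_num₀_div_den₀_and_tendsto :
    StrictAntiOn (fun s => num₀ s / den₀ s) (Ioi 0) ∧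
      Tendsto (fun s => num₀ s / den₀ s) (𝓝[>] 0) (𝓝 (1 / 2)) := by
  have hEq : EqOn (fun s => num₁ s / den₁ s)
      (fun s => (1 / s - 1 / sinh s) / ((s * cosh s - sinh s) / s ^ 2)) (Ioi 0) :=
    fun s hs => (deriv_num₀_div_deriv_den₀ hs).symm
  obtain ⟨hanti, hlim⟩ := strictAntiOn_num₁_div_den₁_and_tendsto
  exact strictAntiOn_div_and_tendsto_of_deriv_div (fun s hs => hasDerivAt_num₀ hs)
    (fun s hs => hasDerivAt_den₀ (ne_of_gt hs)) tendsto_num₀ tendsto_den₀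
    (fun s hs => div_pos (sub_pos.2 (sinh_lt_mul_cosh hs)) (pow_pos hs 2))
    ⟨hanti.congr hEq, hlim.congr' (hEq.eventuallyEq_of_mem self_mem_nhdsWithin)⟩

theorem num₀_pos {s : ℝ} (hs : 0 < s) : 0 < num₀ s := by
  refine (strictMonoOn_of_hasDerivAt_pos (fun x hx => hasDerivAt_num₀ hx) fun x (hx : 0 < x) => ?_
    ).pos_of_tendsto_nhdsGT tendsto_num₀ hs
  exact sub_pos.2 (one_div_lt_one_div_of_lt hx (self_lt_sinh_iff.2 hx))

theorem num₀_le_self {s : ℝ} (hs : 0 < s) : num₀ s ≤ s := by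
  have hsinh : s < sinh s := self_lt_sinh_iff.2 hs
  have hcosh : cosh s + 1 ≤ 2 * exp s := by
    have := exp_le_one_iff.2 (neg_nonpos.2 hs.le)
    rw [cosh_eq]; linarith [one_le_exp hs.le]
  rw [num₀, log_le_iff_le_exp (by have := cosh_pos s; positivity), div_le_iff₀ (by linarith)]
  nlinarith [exp_pos s, cosh_pos s]

theorem tendsto_num₀_div_den₀_atTop : Tendsto (fun s => num₀ s / den₀ s) atTop (𝓝 0) := by
  refine tendsto_of_tendsto_of_tendsto_of_le_of_le' tendsto_const_nhds
    tendsto_sq_div_sinh_sub_self_atTop ?_ ?_ <;>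
    filter_upwards [eventually_gt_atTop 0] with s hs
  all_goals have hsinh : 0 < sinh s - s := sub_pos.2 (self_lt_sinh_iff.2 hs)
  · exact div_nonneg (num₀_pos hs).le (div_pos hsinh hs).le
  · rw [den₀, div_div_eq_mul_div, pow_two]
    gcongr
    exact num₀_le_self hs

theorem artanh_eqOn_real_artanh : EqOn _root_.artanh Real.artanh (Icc (-1) 1) :=
  fun _ hr => (Real.artanh_eq_half_log hr).symm

theorem two_mul_artanh_pos {r : ℝ} (hr : r ∈ Ioo 0 1) : 0 < 2 * _root_.artanh r := by
  rw [artanh_eqOn_real_artanh (Ioo_subset_Icc_self (Ioo_subset_Ioo_left (by norm_num) hr))]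
  linarith [Real.artanh_pos hr]

theorem strictMonoOn_two_mul_artanh : StrictMonoOn (fun r => 2 * _root_.artanh r) (Ioo 0 1) := by
  have hsub : Ioo (0 : ℝ) 1 ⊆ Ioo (-1) 1 := Ioo_subset_Ioo_left (by norm_num)
  intro x hx y hy hxy
  simp only [artanh_eqOn_real_artanh (Ioo_subset_Icc_self (hsub hx)),
    artanh_eqOn_real_artanh (Ioo_subset_Icc_self (hsub hy))]
  linarith [Real.strictMonoOn_artanh (hsub hx) (hsub hy) hxy]

theorem sinh_two_mul_artanh {r : ℝ} (hr : r ∈ Ioo (-1) 1) :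
    sinh (2 * _root_.artanh r) = 2 * r / (1 - r ^ 2) := by
  have h : 0 < 1 - r ^ 2 := by nlinarith [hr.1, hr.2]
  rw [artanh_eqOn_real_artanh (Ioo_subset_Icc_self hr), sinh_two_mul, Real.sinh_artanh hr,
    Real.cosh_artanh hr]
  field_simp
  rw [sq_sqrt h.le]

theorem cosh_two_mul_artanh {r : ℝ} (hr : r ∈ Ioo (-1) 1) :
    cosh (2 * _root_.artanh r) = (1 + r ^ 2) / (1 - r ^ 2) := by
  have h : 0 < 1 - r ^ 2 := by nlinarith [hr.1, hr.2]
  rw [artanh_eqOn_real_artanh (Ioo_subset_Icc_self hr), cosh_two_mul, Real.sinh_artanh hr,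
    Real.cosh_artanh hr]
  field_simp
  rw [sq_sqrt h.le]

theorem two_mul_artanh_eq_log (r : ℝ) : 2 * _root_.artanh r = log ((1 + r) / (1 - r)) := by
  rw [_root_.artanh]; ring

theorem tendsto_two_mul_artanh_nhdsGT_zero :
    Tendsto (fun r => 2 * _root_.artanh r) (𝓝[>] 0) (𝓝[>] 0) := by
  refine tendsto_nhdsWithin_iff.2 ⟨?_, ?_⟩
  · simp only [two_mul_artanh_eq_log]
    have hcont : ContinuousAt (fun r : ℝ => log ((1 + r) / (1 - r))) 0 :=
      (continuousAt_log (by norm_num)).comp (by fun_prop (disch := norm_num))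
    simpa using hcont.tendsto.mono_left nhdsWithin_le_nhds
  · filter_upwards [Ioo_mem_nhdsGT one_pos] with r hr
    exact two_mul_artanh_pos hr

theorem tendsto_two_mul_artanh_nhdsLT_one :
    Tendsto (fun r => 2 * _root_.artanh r) (𝓝[<] 1) atTop := by
  have hsub : Tendsto (fun r : ℝ => 1 - r) (𝓝[<] 1) (𝓝[>] 0) := by
    refine tendsto_nhdsWithin_iff.2 ⟨?_, ?_⟩
    · simpa using ((by fun_prop : Continuous fun r : ℝ => 1 - r).tendsto 1).mono_left
        nhdsWithin_le_nhds
    · filter_upwards [self_mem_nhdsWithin] with r (hr : r < 1)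
      exact sub_pos.2 hr
  have hadd : Tendsto (fun r : ℝ => 1 + r) (𝓝[<] 1) (𝓝 2) := by
    simpa [one_add_one_eq_two] using
      ((by fun_prop : Continuous fun r : ℝ => 1 + r).tendsto 1).mono_left nhdsWithin_le_nhds
  have h := tendsto_log_atTop.comp (hadd.pos_mul_atTop two_pos hsub.inv_tendsto_nhdsGT_zero)
  exact h.congr fun r => by simp [two_mul_artanh_eq_log, div_eq_mul_inv]

noncomputable def f₈ (r : ℝ) : ℝ :=
  ((1 - r ^ 2) * _root_.artanh r / (r - (1 - r ^ 2) * _root_.artanh r)) *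
    log (_root_.artanh r / r)

theorem f₈_eqOn :
    EqOn ((fun s => num₀ s / den₀ s) ∘ fun r => 2 * _root_.artanh r) f₈ (Ioo 0 1) := by
  intro r hr
  have hr' : r ∈ Ioo (-1) 1 := Ioo_subset_Ioo_left (by norm_num) hr
  have h1 : 0 < 1 - r ^ 2 := by nlinarith [hr.1, hr.2]
  have hr0 : 0 < r := hr.1
  rw [Function.comp_apply, f₈, num₀, den₀, sinh_two_mul_artanh hr', cosh_two_mul_artanh hr']
  have hlog : 2 * _root_.artanh r * ((1 + r ^ 2) / (1 - r ^ 2) + 1) / (2 * (2 * r / (1 - r ^ 2)))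
      = _root_.artanh r / r := by
    field_simp
    ring
  rw [hlog]
  field_simp

theorem strictAntiOn_f₈ : StrictAntiOn f₈ (Ioo 0 1) :=
  (strictAntiOn_num₀_div_den₀_and_tendsto.1.comp_strictMonoOn strictMonoOn_two_mul_artanh
    fun _ hr => two_mul_artanh_pos hr).congr f₈_eqOn

theorem tendsto_f₈_nhdsGT_zero : Tendsto f₈ (𝓝[>] 0) (𝓝 (1 / 2)) :=
  (strictAntiOn_num₀_div_den₀_and_tendsto.2.comp tendsto_two_mul_artanh_nhdsGT_zero).congr'
    (f₈_eqOn.eventuallyEq_of_mem (Ioo_mem_nhdsGT one_pos))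

theorem tendsto_f₈_nhdsLT_one : Tendsto f₈ (𝓝[<] 1) (𝓝 0) :=
  (tendsto_num₀_div_den₀_atTop.comp tendsto_two_mul_artanh_nhdsLT_one).congr'
    (f₈_eqOn.eventuallyEq_of_mem (Ioo_mem_nhdsLT one_pos))

end ArtanhRatio

theorem stmt6 :
    StrictAntiOn (fun r : ℝ =>
      ((1 - r^2) * _root_.artanh r / (r - (1 - r^2) * _root_.artanh r)) * Real.log (_root_.artanh r / r)) (Ioo 0 1) ∧
    Tendsto (fun r : ℝ =>
      ((1 - r^2) * _root_.artanh r / (r - (1 - r^2) * _root_.artanh r)) * Real.log (_root_.artanh r / r)) (𝓝[>] 0) (𝓝 (1/2)) ∧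
    Tendsto (fun r : ℝ =>
      ((1 - r^2) * _root_.artanh r / (r - (1 - r^2) * _root_.artanh r)) * Real.log (_root_.artanh r / r)) (𝓝[<] 1) (𝓝 0) := by
  exact ⟨ArtanhRatio.strictAntiOn_f₈, ArtanhRatio.tendsto_f₈_nhdsGT_zero,
    ArtanhRatio.tendsto_f₈_nhdsLT_one⟩
end

section
/- For all r ∈ (0,1), (13 - 9r²)·(artanh(r)/r) - 13 + 6r² > (14/15)·r². -/
/-!
Multiplying by `r`, the claim is `(13 - 9r²) artanh r > 13r - (76/15) r³`. Expanding
`artanh r = ∑ r^(2k+1)/(2k+1)`, the left side is `13r - (14/3) r³ - (2/5) r⁵ + ∑_{k ≥ 3} c_k r^(2k+1)`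
with `c_k = 13/(2k+1) - 9/(2k-1)`, which is positive for `k ≥ 3`. So the left side exceeds the right
by at least `(2/5) r³ (1 - r²) > 0`.
-/

open Real Set Filter Topology

open Finset

theorem hasSum_artanh {r : ℝ} (hr : |r| < 1) :
    HasSum (fun k : ℕ => r ^ (2 * k + 1) / (2 * k + 1)) (_root_.artanh r) := by
  obtain ⟨hneg, hpos⟩ := abs_lt.mp hr
  have hterm : (fun k : ℕ => r ^ (2 * k + 1) / (2 * k + 1)) =
      fun k : ℕ => 1 / 2 * (2 * (1 / (2 * k + 1)) * r ^ (2 * k + 1)) := by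
    funext k
    ring
  rw [_root_.artanh, log_div (by linarith) (by linarith), hterm]
  exact (hasSum_log_sub_log_of_abs_lt_one hr).mul_left _

/-- Termwise, `9 r² · r^(2k+7)/(2k+7) ≤ 13 · r^(2k+9)/(2k+9)`. -/
theorem nine_mul_sq_mul_artanh_tail_le {r : ℝ} (h0 : 0 ≤ r) (h1 : r < 1) :
    9 * r ^ 2 * (_root_.artanh r - (r + r ^ 3 / 3 + r ^ 5 / 5))
      ≤ 13 * (_root_.artanh r - (r + r ^ 3 / 3 + r ^ 5 / 5 + r ^ 7 / 7)) := by
  have hA := hasSum_artanh (abs_lt.mpr ⟨by linarith, h1⟩)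
  have hT3 := ((hasSum_nat_add_iff' 3).mpr hA).mul_left (9 * r ^ 2)
  have hT4 := ((hasSum_nat_add_iff' 4).mpr hA).mul_left 13
  simp only [sum_range_succ, sum_range_zero] at hT3 hT4
  norm_num at hT3 hT4
  refine hasSum_le (fun k => ?_) hT3 hT4
  have hcoeff : (9 : ℝ) / (2 * (k + 3) + 1) ≤ 13 / (2 * (k + 4) + 1) := by
    rw [div_le_div_iff₀ (by positivity) (by positivity)]
    linarith [k.cast_nonneg (α := ℝ)]
  calc 9 * r ^ 2 * (r ^ (2 * (k + 3) + 1) / (2 * (k + 3) + 1))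
      = r ^ (2 * (k + 4) + 1) * (9 / (2 * (k + 3) + 1)) := by ring
    _ ≤ r ^ (2 * (k + 4) + 1) * (13 / (2 * (k + 4) + 1)) := by gcongr
    _ = 13 * (r ^ (2 * (k + 4) + 1) / (2 * (k + 4) + 1)) := by ring

theorem stmt7 : ∀ r ∈ Ioo (0:ℝ) 1,
    (13 - 9*r^2) * (_root_.artanh r / r) - 13 + 6*r^2 > (14/15) * r^2 := by
  rintro r ⟨h0, h1⟩
  have htail := nine_mul_sq_mul_artanh_tail_le h0.le h1
  have hr2 : 0 < 1 - r ^ 2 := sub_pos.mpr (pow_lt_one₀ h0.le h1 two_ne_zero)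
  have hcleared : 13 * r - 76 / 15 * r ^ 3 < (13 - 9 * r ^ 2) * _root_.artanh r := by
    nlinarith [pow_pos h0 7, mul_pos (pow_pos h0 3) hr2]
  have hquot : 13 - 76 / 15 * r ^ 2 < (13 - 9 * r ^ 2) * (_root_.artanh r / r) := by
    rw [mul_div_assoc', lt_div_iff₀ h0]
    linarith
  linarith
end

section
/- For all r ∈ (0,1), (1 - 5r²)·(artanh(r)/r) - 1 + 2r² < -(8/3)·r². -/
open Real Set Filter Topology

/-!
Both Taylor-type bounds `r + r³/3 < artanh r` and `(1 - r²) artanh r < r - 2r³/3` follow by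
differentiating their difference, which vanishes at `0`. Splitting
`(1 - 5r²) artanh r = (1 - r²) artanh r - 4r² artanh r` and applying the second bound to the
first summand and the first bound to the second gives
`(1 - 5r²) artanh r < r - 14r³/3 - 4r⁵/3 < r - 14r³/3`, which is the claim after dividing by `r`.
-/

lemma pos_of_hasDerivAt_pos_s8 {f f' : ℝ → ℝ} {a b : ℝ} (ha : f a = 0)
    (hf : ∀ x ∈ Ico a b, HasDerivAt f (f' x) x) (hf' : ∀ x ∈ Ioo a b, 0 < f' x) :
    ∀ x ∈ Ioo a b, 0 < f x := by
  intro x hx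
  have hmono : StrictMonoOn f (Ico a b) := by
    refine strictMonoOn_of_hasDerivWithinAt_pos (f' := f') (convex_Ico a b)
      (fun y hy ↦ (hf y hy).continuousAt.continuousWithinAt) ?_ ?_ <;> rw [interior_Ico]
    · exact fun y hy ↦ (hf y (Ioo_subset_Ico_self hy)).hasDerivWithinAt
    · exact hf'
  simpa [ha] using hmono (left_mem_Ico.mpr (hx.1.trans hx.2)) (Ioo_subset_Ico_self hx) hx.1

lemma hasDerivAt_artanh_s8 {x : ℝ} (hx : x ∈ Ioo (-1) 1) :
    HasDerivAt _root_.artanh (1 / (1 - x ^ 2)) x := by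
  have hp : 0 < 1 + x := by linarith [hx.1]
  have hm : 0 < 1 - x := by linarith [hx.2]
  have hq := ((hasDerivAt_id x).const_add 1).div ((hasDerivAt_id x).const_sub 1) hm.ne'
  refine ((hq.log (div_pos hp hm).ne').const_mul (1 / 2)).congr_deriv ?_
  have : 1 - x ^ 2 ≠ 0 := by nlinarith
  simp only [Pi.div_apply, id_eq]
  field_simp
  ring

lemma add_cube_div_three_lt_artanh {r : ℝ} (hr : r ∈ Ioo 0 1) :
    r + r ^ 3 / 3 < _root_.artanh r := by
  have key := pos_of_hasDerivAt_pos_s8 (f := fun x ↦ _root_.artanh x - (x + x ^ 3 / 3))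
    (f' := fun x ↦ 1 / (1 - x ^ 2) - (1 + x ^ 2)) (by simp [_root_.artanh])
    (fun x hx ↦ by
      refine ((hasDerivAt_artanh_s8 ⟨by linarith [hx.1], hx.2⟩).sub
        ((hasDerivAt_id x).add ((hasDerivAt_pow 3 x).div_const 3))).congr_deriv ?_
      norm_num)
    (fun x hx ↦ by
      have h : 0 < 1 - x ^ 2 := by nlinarith [hx.1, hx.2]
      -- the derivative is `x⁴ / (1 - x²)`
      rw [sub_pos, lt_div_iff₀ h]
      nlinarith [pow_pos hx.1 4])
    r hr
  linarith

lemma one_sub_sq_mul_artanh_lt {r : ℝ} (hr : r ∈ Ioo 0 1) :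
    (1 - r ^ 2) * _root_.artanh r < r - 2 / 3 * r ^ 3 := by
  have key := pos_of_hasDerivAt_pos_s8
    (f := fun x ↦ x - 2 / 3 * x ^ 3 - (1 - x ^ 2) * _root_.artanh x)
    (f' := fun x ↦ 2 * x * (_root_.artanh x - x)) (by simp [_root_.artanh])
    (fun x hx ↦ by
      have h : 1 - x ^ 2 ≠ 0 := by nlinarith [hx.1, hx.2]
      refine (((hasDerivAt_id x).sub ((hasDerivAt_pow 3 x).const_mul (2 / 3))).sub
        (((hasDerivAt_const x 1).sub (hasDerivAt_pow 2 x)).mul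
          (hasDerivAt_artanh_s8 ⟨by linarith [hx.1], hx.2⟩))).congr_deriv ?_
      norm_num
      field_simp
      ring)
    (fun x hx ↦ mul_pos (by linarith [hx.1])
      (by linarith [add_cube_div_three_lt_artanh hx, pow_pos hx.1 3]))
    r hr
  linarith

theorem stmt8 : ∀ r ∈ Ioo (0:ℝ) 1,
    (1 - 5*r^2) * (_root_.artanh r / r) - 1 + 2*r^2 < -(8/3) * r^2 := by
  intro r hr
  have hlower := add_cube_div_three_lt_artanh hr
  have hupper := one_sub_sq_mul_artanh_lt hr
  have hr0 := hr.1
  have key : (1 - 5 * r ^ 2) * _root_.artanh r < r - 14 / 3 * r ^ 3 :=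
    calc (1 - 5 * r ^ 2) * _root_.artanh r
        = (1 - r ^ 2) * _root_.artanh r - 4 * r ^ 2 * _root_.artanh r := by ring
      _ < (r - 2 / 3 * r ^ 3) - 4 * r ^ 2 * (r + r ^ 3 / 3) :=
        sub_lt_sub hupper (mul_lt_mul_of_pos_left hlower (by positivity))
      _ ≤ r - 14 / 3 * r ^ 3 := by nlinarith [pow_pos hr0 5]
  have hdiv : (1 - 5 * r ^ 2) * (_root_.artanh r / r) < 1 - 14 / 3 * r ^ 2 := by
    rw [mul_div_assoc', div_lt_iff₀ hr0]
    linarith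
  linarith
end

section
/- All coefficients of the Maclaurin series (in powers of r²) of the function f₁₈(r) = [(1 - r²/2 - r⁴/16 - r⁶/32)·K(r) - E(r)]/r⁸ are positive; explicitly, with aₙ = ((1/2)ₙ/n!)², the coefficient bₙ = ((2n+8)/(2n+7))·a_{n+4} - a_{n+3}/2 - a_{n+2}/16 - a_{n+1}/32 satisfies bₙ = (n+2)(n+1)(26n²+116n+123)/(16(n+3)(n+4)(2n+3)²)·a_{n+2} > 0 for all n ≥ 0. In particular f₁₈(0⁺) = 41π/4096. -/
open Real Set Filter Topology

noncomputable def aseq (n : ℕ) : ℝ :=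
  ((∏ i ∈ Finset.range n, ((1:ℝ)/2 + i)) / n.factorial)^2

noncomputable def bseq (n : ℕ) : ℝ :=
  ((2*(n:ℝ)+8)/(2*n+7)) * aseq (n+4) - aseq (n+3) / 2 - aseq (n+2) / 16 - aseq (n+1) / 32

/-!
Expanding `(1 - r² sin² t) ^ a` by the binomial series and integrating term by term with Wallis'
formula gives `K(r) = (π/2) ∑ aₙ r²ⁿ` and `E(r) = (π/2) ∑ aₙ r²ⁿ / (1 - 2n)`. In the combination
`(1 - r²/2 - r⁴/16 - r⁶/32) K(r) - E(r)` the coefficients of `1, r², r⁴, r⁶` cancel, and the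
coefficient of `r²ⁿ⁺⁸` is `(π/2) bₙ`. The ratio `aₙ₊₁ / aₙ = ((2n+1)/(2n+2))²` turns `bₙ` into a
rational multiple of `aₙ₊₂`, which is visibly positive, and dominated convergence gives the limit
`(π/2) b₀` at `0⁺`.
-/

noncomputable def wallisRatio (n : ℕ) : ℝ :=
  (∏ i ∈ Finset.range n, ((1:ℝ)/2 + i)) / n.factorial

lemma wallisRatio_zero : wallisRatio 0 = 1 := by
  simp [wallisRatio]

lemma wallisRatio_succ (n : ℕ) :
    wallisRatio (n + 1) = wallisRatio n * ((2 * n + 1) / (2 * n + 2)) := by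
  rw [wallisRatio, wallisRatio, Finset.prod_range_succ, Nat.factorial_succ]
  push_cast
  field_simp
  ring

lemma wallisRatio_pos (n : ℕ) : 0 < wallisRatio n :=
  div_pos (Finset.prod_pos fun i _ => by positivity) (by positivity)

lemma aseq_eq_wallisRatio_sq (n : ℕ) : aseq n = wallisRatio n ^ 2 := rfl

lemma aseq_pos (n : ℕ) : 0 < aseq n := pow_pos (wallisRatio_pos n) 2

lemma aseq_succ (n : ℕ) : aseq (n + 1) = aseq n * ((2 * n + 1) / (2 * n + 2)) ^ 2 := by
  rw [aseq_eq_wallisRatio_sq, aseq_eq_wallisRatio_sq, wallisRatio_succ, mul_pow]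

lemma integral_sin_pow_two_mul (n : ℕ) :
    ∫ t in (0:ℝ)..(π/2), sin t ^ (2 * n) = π / 2 * wallisRatio n := by
  induction n with
  | zero => simp [wallisRatio_zero]
  | succ k ih =>
    rw [show 2 * (k + 1) = 2 * k + 2 by ring, integral_sin_pow, ih, wallisRatio_succ, sin_zero,
      cos_pi_div_two]
    push_cast
    ring

open Polynomial in
theorem Ring.succ_mul_choose_succ {K : Type*} [Field K] [CharZero K] (a : K) (n : ℕ) :
    ((n : K) + 1) * Ring.choose a (n + 1) = (a - n) * Ring.choose a n := by
  simp only [Ring.choose_eq_smul, descPochhammer_succ_right, smeval_mul, smul_eq_mul,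
    Nat.factorial_succ, smeval_sub, smeval_X, smeval_natCast, pow_one, pow_zero, nsmul_eq_mul,
    mul_one]
  push_cast
  field_simp

lemma abs_choose_le_one {a : ℝ} (ha : |a| ≤ 1) : ∀ n : ℕ, |Ring.choose a n| ≤ 1
  | 0 => by simp
  | n + 1 => by
    have hrec : ((n : ℝ) + 1) * |Ring.choose a (n + 1)| = |a - n| * |Ring.choose a n| := by
      rw [← abs_mul, ← Ring.succ_mul_choose_succ, abs_mul,
        abs_of_pos (by positivity : (0:ℝ) < n + 1)]
    have hfactor : |a - n| ≤ n + 1 := by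
      linarith [abs_sub a n, abs_of_nonneg (Nat.cast_nonneg (α := ℝ) n)]
    nlinarith [abs_choose_le_one ha n, abs_nonneg (a - n), abs_nonneg (Ring.choose a n)]

lemma neg_one_pow_mul_choose_neg_half (n : ℕ) :
    (-1) ^ n * Ring.choose (-(1/2) : ℝ) n = wallisRatio n := by
  induction n with
  | zero => simp [wallisRatio_zero]
  | succ n ih =>
    have hrec := Ring.succ_mul_choose_succ (-(1/2) : ℝ) n
    rw [wallisRatio_succ, ← ih]
    field_simp
    linear_combination (-2 * (-1) ^ n) * hrec

lemma one_sub_two_mul_natCast_ne_zero (n : ℕ) : (1 : ℝ) - 2 * n ≠ 0 := by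
  have : (1 : ℤ) - 2 * n ≠ 0 := by omega
  exact_mod_cast this

lemma neg_one_pow_mul_choose_half (n : ℕ) :
    (-1) ^ n * Ring.choose (1/2 : ℝ) n = wallisRatio n / (1 - 2 * n) := by
  induction n with
  | zero => simp [wallisRatio_zero]
  | succ n ih =>
    have hrec := Ring.succ_mul_choose_succ (1/2 : ℝ) n
    rw [eq_div_iff (one_sub_two_mul_natCast_ne_zero n)] at ih
    have hden := one_sub_two_mul_natCast_ne_zero (n + 1)
    rw [wallisRatio_succ, ← ih]
    push_cast at hden ⊢
    field_simp
    linear_combination ((4 * n + 2) * (-1) ^ n) * hrec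

lemma hasSum_choose_mul_pow {a x : ℝ} (hx : |x| < 1) :
    HasSum (fun n => Ring.choose a n * x ^ n) ((1 + x) ^ a) := by
  have := Real.one_add_rpow_hasFPowerSeriesOnBall_zero (a := a) |>.hasSum (y := x) ?_
  · simpa [binomialSeries, mul_comm] using this
  · simpa [Metric.mem_eball, edist_dist] using hx

lemma hasSum_integral_one_sub_sq_mul_sin_sq_rpow {a r : ℝ} (ha : |a| ≤ 1) (hr : |r| < 1) :
    HasSum (fun n => π / 2 * ((-1) ^ n * Ring.choose a n * wallisRatio n) * (r ^ 2) ^ n)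
      (∫ t in (0:ℝ)..(π/2), (1 - r ^ 2 * sin t ^ 2) ^ a) := by
  have hr2 : r ^ 2 < 1 := by nlinarith [abs_nonneg r, sq_abs r]
  have hsin : ∀ t, |r ^ 2 * sin t ^ 2| ≤ r ^ 2 := fun t => by
    rw [abs_of_nonneg (by positivity)]
    nlinarith [sin_sq_le_one t, sq_nonneg r]
  have hterms : HasSum (fun n => ∫ t in (0:ℝ)..(π/2), Ring.choose a n * (-(r ^ 2 * sin t ^ 2)) ^ n)
      (∫ t in (0:ℝ)..(π/2), (1 - r ^ 2 * sin t ^ 2) ^ a) := by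
    refine intervalIntegral.hasSum_integral_of_dominated_convergence (fun n _ => (r ^ 2) ^ n)
      (fun n => by fun_prop) (fun n => ?_) ?_ intervalIntegrable_const ?_
    · filter_upwards with t _
      rw [norm_mul, norm_pow, norm_neg, Real.norm_eq_abs, Real.norm_eq_abs]
      exact (mul_le_of_le_one_left (by positivity) (abs_choose_le_one ha n)).trans
        (pow_le_pow_left₀ (abs_nonneg _) (hsin t) n)
    · exact .of_forall fun t _ => summable_geometric_of_lt_one (by positivity) hr2
    · refine .of_forall fun t _ => ?_
      simpa [sub_eq_add_neg] using hasSum_choose_mul_pow (a := a)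
        (by rw [abs_neg]; exact (hsin t).trans_lt hr2)
  convert hterms using 2 with n
  have hexpand : ∀ t, Ring.choose a n * (-(r ^ 2 * sin t ^ 2)) ^ n
      = (-1) ^ n * Ring.choose a n * (r ^ 2) ^ n * sin t ^ (2 * n) := fun t => by
    rw [neg_pow, mul_pow, ← pow_mul]
    ring
  simp_rw [hexpand]
  rw [intervalIntegral.integral_const_mul, integral_sin_pow_two_mul]
  ring

lemma hasSum_ellipticK {r : ℝ} (hr : |r| < 1) :
    HasSum (fun n => π / 2 * aseq n * (r ^ 2) ^ n) (ellipticK r) := by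
  unfold ellipticK
  convert hasSum_integral_one_sub_sq_mul_sin_sq_rpow (a := -(1/2)) (by norm_num [abs_of_pos]) hr
    using 3 with n
  rw [neg_one_pow_mul_choose_neg_half, aseq_eq_wallisRatio_sq, sq]

lemma hasSum_ellipticE {r : ℝ} (hr : |r| < 1) :
    HasSum (fun n => π / 2 * (aseq n / (1 - 2 * n)) * (r ^ 2) ^ n) (ellipticE r) := by
  unfold ellipticE
  convert hasSum_integral_one_sub_sq_mul_sin_sq_rpow (a := 1/2) (by norm_num [abs_of_pos]) hr
    using 3 with n
  rw [neg_one_pow_mul_choose_half, aseq_eq_wallisRatio_sq]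
  ring

lemma bseq_eq_coeff (n : ℕ) :
    bseq n = aseq (n + 4) - aseq (n + 3) / 2 - aseq (n + 2) / 16 - aseq (n + 1) / 32
      - aseq (n + 4) / (1 - 2 * ((n : ℝ) + 4)) := by
  have h : 1 - 2 * ((n : ℝ) + 4) ≠ 0 := by exact_mod_cast one_sub_two_mul_natCast_ne_zero (n + 4)
  rw [bseq]
  field_simp
  ring

lemma bseq_eq (n : ℕ) : bseq n =
    (((n:ℝ)+2)*((n:ℝ)+1)*(26*(n:ℝ)^2+116*n+123)) /
      (16*((n:ℝ)+3)*((n:ℝ)+4)*(2*(n:ℝ)+3)^2) * aseq (n+2) := by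
  have h2 := aseq_succ (n + 1)
  have h3 := aseq_succ (n + 2)
  have h4 := aseq_succ (n + 3)
  push_cast at h2 h3 h4
  rw [bseq, h4, h3, h2]
  field_simp
  ring

lemma bseq_pos (n : ℕ) : 0 < bseq n := by
  rw [bseq_eq]
  exact mul_pos (by positivity) (aseq_pos _)

lemma bseq_zero : bseq 0 = 41 / 2048 := by
  norm_num [bseq_eq, aseq_succ, aseq_eq_wallisRatio_sq, wallisRatio_zero]

lemma hasSum_numerator {r : ℝ} (hr : |r| < 1) :
    HasSum (fun n => π / 2 * bseq n * (r ^ 2) ^ (n + 4))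
      ((1 - r^2/2 - r^4/16 - r^6/32) * ellipticK r - ellipticE r) := by
  have hK (k : ℕ) : HasSum (fun n => π / 2 * aseq (n + k) * (r ^ 2) ^ (n + k))
      (ellipticK r - ∑ i ∈ Finset.range k, π / 2 * aseq i * (r ^ 2) ^ i) :=
    (hasSum_nat_add_iff' k).2 (hasSum_ellipticK hr)
  have hE : HasSum (fun n => π / 2 * (aseq (n + 4) / (1 - 2 * (n + 4 : ℕ))) * (r ^ 2) ^ (n + 4))
      (ellipticE r - ∑ i ∈ Finset.range 4, π / 2 * (aseq i / (1 - 2 * i)) * (r ^ 2) ^ i) :=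
    (hasSum_nat_add_iff' 4).2 (hasSum_ellipticE hr)
  have hcomb := (((hK 4).add ((hK 3).mul_left (-(r ^ 2 / 2)))).add
    ((hK 2).mul_left (-(r ^ 4 / 16)))).add ((hK 1).mul_left (-(r ^ 6 / 32)))
    |>.add (hE.mul_left (-1))
  convert hcomb.congr_fun (g := fun n => π / 2 * bseq n * (r ^ 2) ^ (n + 4))
    (fun n => by rw [bseq_eq_coeff]; push_cast; ring) using 1
  norm_num [Finset.sum_range_succ, aseq, Finset.prod_range_succ, Nat.factorial]
  ring

noncomputable def f18 (r : ℝ) : ℝ :=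
  ((1 - r^2/2 - r^4/16 - r^6/32) * ellipticK r - ellipticE r) / r^8

lemma hasSum_f18 {r : ℝ} (hr0 : r ≠ 0) (hr : |r| < 1) :
    HasSum (fun n => π / 2 * bseq n * (r ^ 2) ^ n) (f18 r) := by
  refine ((hasSum_numerator hr).div_const (r ^ 8)).congr_fun fun n => ?_
  field_simp
  ring

lemma tendsto_f18 : Tendsto f18 (𝓝[>] 0) (𝓝 (π / 2 * bseq 0)) := by
  have hseries : (fun r => ∑' n, π / 2 * bseq n * (r ^ 2) ^ n) =ᶠ[𝓝[>] 0] f18 := by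
    filter_upwards [Ioo_mem_nhdsGT zero_lt_one] with r hr
    exact (hasSum_f18 hr.1.ne' (abs_lt.2 ⟨by linarith [hr.1], hr.2⟩)).tsum_eq
  have hzero : ∑' n, π / 2 * bseq n * ((0:ℝ) ^ 2) ^ n = π / 2 * bseq 0 := by
    rw [tsum_eq_single 0 fun n hn => by simp [hn]]
    simp
  rw [← hzero]
  refine (tendsto_tsum_of_dominated_convergence (bound := fun n => π / 2 * bseq n * ((1/2) ^ 2) ^ n)
    ?_ (fun n => ?_) ?_).congr' hseries
  · exact (hasSum_f18 (by norm_num) (by norm_num [abs_of_pos])).summable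
  · exact ((continuous_const.mul ((continuous_pow 2).pow n)).tendsto 0).mono_left nhdsWithin_le_nhds
  · filter_upwards [Ioo_mem_nhdsGT (by norm_num : (0:ℝ) < 1/2)] with r hr n
    have hb := bseq_pos n
    rw [Real.norm_eq_abs, abs_of_nonneg (by positivity)]
    gcongr
    exacts [hr.1.le, hr.2.le]

theorem stmt11 :
    (∀ n : ℕ, bseq n =
      (((n:ℝ)+2)*((n:ℝ)+1)*(26*(n:ℝ)^2+116*n+123)) /
        (16*((n:ℝ)+3)*((n:ℝ)+4)*(2*(n:ℝ)+3)^2) * aseq (n+2) ∧ 0 < bseq n) ∧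
    (∀ r ∈ Ioo (0:ℝ) 1,
      ((1 - r^2/2 - r^4/16 - r^6/32) * ellipticK r - ellipticE r) / r^8 =
        (π/2) * ∑' n : ℕ, bseq n * r^(2*n)) ∧
    Tendsto (fun r : ℝ =>
        ((1 - r^2/2 - r^4/16 - r^6/32) * ellipticK r - ellipticE r) / r^8)
      (𝓝[>] 0) (𝓝 (41*π/4096)) := by
  refine ⟨fun n => ⟨bseq_eq n, bseq_pos n⟩, fun r hr => ?_, ?_⟩
  · have hr1 : |r| < 1 := abs_lt.2 ⟨by linarith [hr.1], hr.2⟩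
    change f18 r = _
    rw [← tsum_mul_left, ← (hasSum_f18 hr.1.ne' hr1).tsum_eq]
    simp only [pow_mul, mul_assoc]
  · rw [show 41 * π / 4096 = π / 2 * bseq 0 by rw [bseq_zero]; ring]
    exact tendsto_f18
end
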